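/- Let M and N be n-parameter rectangle persistence modules with rectangles ∏_{i=1}^n (a_i,b_i) and ∏_{i=1}^n (c_i,d_i). Then d_I(M,N) = min{ max{ min_{1≤i≤n} (b_i−a_i)/2 , min_{1≤i≤n} (d_i−c_i)/2 } , max{ ‖c−a‖_∞ , ‖d−b‖_∞ } }. -/

import Mathlib

open Classical

noncomputable section

/-- A point of the parameter space `ℝⁿ`. -/
abbrev Pt (n : ℕ) := Fin n → ℝ

/-- Shift of a point by the diagonal vector `(ε, …, ε)`. -/
def shiftPt {n : ℕ} (u : Pt n) (ε : ℝ) : Pt n := fun i => u i + ε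

lemma shiftPt_mono {n : ℕ} {u v : Pt n} (ε : ℝ) (h : u ≤ v) :
    shiftPt u ε ≤ shiftPt v ε := fun i => add_le_add (h i) (le_refl ε)

lemma le_shiftPt {n : ℕ} (u : Pt n) {ε : ℝ} (hε : 0 ≤ ε) : u ≤ shiftPt u ε :=
  fun i => le_add_of_nonneg_right hε

/-- An `n`-parameter persistence module over the field `k`. -/
structure PersMod (k : Type) [Field k] (n : ℕ) where
  obj : Pt n → Type
  [acg : ∀ u, AddCommGroup (obj u)]
  [mod : ∀ u, Module k (obj u)]
  map : ∀ {u v : Pt n}, u ≤ v → (obj u →ₗ[k] obj v)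
  map_id : ∀ u : Pt n, map (le_refl u) = LinearMap.id
  map_comp : ∀ {u v w : Pt n} (h1 : u ≤ v) (h2 : v ≤ w),
    (map h2).comp (map h1) = map (h1.trans h2)

attribute [instance] PersMod.acg PersMod.mod

variable {k : Type} [Field k] {n : ℕ}

/-- A morphism of persistence modules. -/
structure PersHom (M N : PersMod k n) where
  app : ∀ u, M.obj u →ₗ[k] N.obj u
  natural : ∀ {u v : Pt n} (h : u ≤ v),
    (app v).comp (M.map h) = (N.map h).comp (app u)

/-- A morphism is trivial when every component is the zero map. -/
def PersHom.Trivial {M N : PersMod k n} (f : PersHom M N) : Prop := ∀ u, f.app u = 0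

/-- The `ε`-shift of a persistence module. -/
def PersMod.shift (M : PersMod k n) (ε : ℝ) : PersMod k n where
  obj u := M.obj (shiftPt u ε)
  map h := M.map (shiftPt_mono ε h)
  map_id u := M.map_id _
  map_comp h1 h2 := M.map_comp _ _

/-- `(f, g)` is an `ε`-interleaving pair between `M` and `N`. -/
def IsInterleavingPair (M N : PersMod k n) (ε : ℝ) (hε : 0 ≤ ε)
    (f : PersHom M (N.shift ε)) (g : PersHom N (M.shift ε)) : Prop :=
  (∀ u : Pt n, (g.app (shiftPt u ε)).comp (f.app u) =
      M.map ((le_shiftPt u hε).trans (le_shiftPt _ hε))) ∧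
  (∀ u : Pt n, (f.app (shiftPt u ε)).comp (g.app u) =
      N.map ((le_shiftPt u hε).trans (le_shiftPt _ hε)))

/-- `M` and `N` are `ε`-interleaved. -/
def Interleaved (M N : PersMod k n) (ε : ℝ) : Prop :=
  ∃ (hε : 0 ≤ ε) (f : PersHom M (N.shift ε)) (g : PersHom N (M.shift ε)),
    IsInterleavingPair M N ε hε f g

/-- The interleaving distance, with value in the extended reals. -/
def interleavingDist (M N : PersMod k n) : EReal :=
  sInf {x : EReal | ∃ ε : ℝ, Interleaved M N ε ∧ x = (ε : EReal)}

/-- `M` is `ε`-trivial : all transition maps `M_u → M_{u+(ε,…,ε)}` vanish. -/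
def EpsTrivial (M : PersMod k n) (ε : ℝ) : Prop :=
  ∀ (u : Pt n) (h : u ≤ shiftPt u ε), M.map h = 0

/-- The zero persistence module. -/
def ZeroMod (k : Type) [Field k] (n : ℕ) : PersMod k n where
  obj _ := PUnit
  map _ := 0
  map_id _ := by apply LinearMap.ext; intro x; exact Subsingleton.elim _ _
  map_comp _ _ := by apply LinearMap.ext; intro x; exact Subsingleton.elim _ _

/-- The space at `u` of the interval module on `I` : all of `k` if `u ∈ I`, `0` otherwise. -/
def segSpace (k : Type) [Field k] {n : ℕ} (I : Set (Pt n)) (u : Pt n) : Submodule k k where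
  carrier := {x | u ∉ I → x = 0}
  add_mem' := by intro x y hx hy h; simp only [Set.mem_setOf_eq] at *; rw [hx h, hy h, add_zero]
  zero_mem' := fun _ => rfl
  smul_mem' := by intro c x hx h; simp only [Set.mem_setOf_eq] at *; rw [hx h, smul_zero]

/-- The interval persistence module on an order-convex set `I` : `k` on `I` with identity
internal transition maps, `0` elsewhere. -/
def IntervalMod (k : Type) [Field k] {n : ℕ} (I : Set (Pt n)) (hI : I.OrdConnected) :
    PersMod k n where
  obj u := segSpace k I u
  map {u v} h :=
    { toFun := fun x => ⟨if v ∈ I then (x : k) else 0, by intro hv; simp [hv]⟩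
      map_add' := by intro x y; apply Subtype.ext; by_cases hv : v ∈ I <;> simp [hv]
      map_smul' := by intro c x; apply Subtype.ext; by_cases hv : v ∈ I <;> simp [hv] }
  map_id u := by
    apply LinearMap.ext; intro x
    apply Subtype.ext
    by_cases hu : u ∈ I
    · simp [hu]
    · simp [hu, x.2 hu]
  map_comp {u v w} h1 h2 := by
    apply LinearMap.ext; intro x
    apply Subtype.ext
    by_cases hw : w ∈ I
    · by_cases hv : v ∈ I
      · simp [hw, hv]
      · by_cases hu : u ∈ I
        · exact absurd (hI.out hu hw ⟨h1, h2⟩) hv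
        · simp [hw, hv, x.2 hu]
    · simp [hw]

/-- The open box `∏ᵢ (aᵢ, bᵢ)` with extended-real endpoints. -/
def box {n : ℕ} (a b : Fin n → EReal) : Set (Pt n) :=
  {u | ∀ i, a i < (u i : EReal) ∧ (u i : EReal) < b i}

lemma box_ordConnected {n : ℕ} (a b : Fin n → EReal) : (box a b).OrdConnected := by
  constructor
  intro u hu w hw v hv i
  exact ⟨lt_of_lt_of_le (hu i).1 (by exact_mod_cast hv.1 i),
    lt_of_le_of_lt (by exact_mod_cast hv.2 i) (hw i).2⟩

/-- The rectangle persistence module with underlying open rectangle `∏ᵢ (aᵢ, bᵢ)`. -/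
def RectMod (k : Type) [Field k] {n : ℕ} (a b : Fin n → EReal) : PersMod k n :=
  IntervalMod k (box a b) (box_ordConnected a b)

/-- Subtraction of extended reals with the conventions `(±∞) − (±∞) = 0`. -/
def esub (x y : EReal) : EReal :=
  if (x = ⊤ ∧ y = ⊤) ∨ (x = ⊥ ∧ y = ⊥) then 0 else x - y

/-- Absolute value on the extended reals (`|±∞| = +∞`). -/
def eabs (x : EReal) : EReal := max x (-x)

/-- The `ℓ^∞`-distance `‖x − y‖_∞` on extended `ℝⁿ`. -/
def supDist {n : ℕ} (x y : Fin n → EReal) : EReal := ⨆ i, eabs (esub (x i) (y i))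

/-- The closed formula for the interleaving distance between the rectangle modules with
rectangles `∏ (aᵢ, bᵢ)` and `∏ (cᵢ, dᵢ)`. -/
def dIFormula {n : ℕ} (a b c d : Fin n → EReal) : EReal :=
  min (max (⨅ i, esub (b i) (a i) / 2) (⨅ i, esub (d i) (c i) / 2))
      (max (supDist c a) (supDist d b))

/-- `M` and `N` are isomorphic persistence modules. -/
def PersIso (M N : PersMod k n) : Prop :=
  ∃ f : PersHom M N, ∀ u, Function.Bijective (f.app u)

/-- `M` is a non-zero persistence module. -/
def PersMod.Nonzero (M : PersMod k n) : Prop := ∃ (u : Pt n) (x : M.obj u), x ≠ 0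

/-- Direct sum of two persistence modules. -/
def dirSum (M N : PersMod k n) : PersMod k n where
  obj u := M.obj u × N.obj u
  map h := (M.map h).prodMap (N.map h)
  map_id u := by
    apply LinearMap.ext; intro x
    show ((M.map (le_refl u)) x.1, (N.map (le_refl u)) x.2) = x
    rw [M.map_id, N.map_id]; rfl
  map_comp h1 h2 := by
    apply LinearMap.ext; intro x
    show ((M.map _) ((M.map _) x.1), (N.map _) ((N.map _) x.2))
      = ((M.map _) x.1, (N.map _) x.2)
    have hM : (M.map h2) ((M.map h1) x.1) = (M.map (h1.trans h2)) x.1 := by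
      rw [← M.map_comp h1 h2]; rfl
    have hN : (N.map h2) ((N.map h1) x.2) = (N.map (h1.trans h2)) x.2 := by
      rw [← N.map_comp h1 h2]; rfl
    rw [hM, hN]

/-- Zigzag-connectedness of a subset of `ℝⁿ`. -/
def ZigzagConnected {n : ℕ} (I : Set (Pt n)) : Prop :=
  ∀ u ∈ I, ∀ v ∈ I,
    Relation.ReflTransGen (fun x y => x ∈ I ∧ y ∈ I ∧ (x ≤ y ∨ y ≤ x)) u v

/-- `I` is an interval in `ℝⁿ`: nonempty, order-convex and zigzag-connected. -/
def IsInterval {n : ℕ} (I : Set (Pt n)) : Prop :=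
  I.Nonempty ∧ I.OrdConnected ∧ ZigzagConnected I

/-- A partial multibijection `Fin m ⇸ Fin k'`, encoded by an `Option`-valued map that is
injective on matched indices. -/
def PartialInj {m k' : ℕ} (σ : Fin m → Option (Fin k')) : Prop :=
  ∀ i j l, σ i = some l → σ j = some l → i = j

/-- `σ` is an `ε`-matching between the barcodes `A` and `B` (families of intervals). -/
def IsEpsMatching (k : Type) [Field k] {n m k' : ℕ}
    (A : Fin m → Set (Pt n)) (hA : ∀ i, (A i).OrdConnected)
    (B : Fin k' → Set (Pt n)) (hB : ∀ j, (B j).OrdConnected)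
    (σ : Fin m → Option (Fin k')) (ε : ℝ) : Prop :=
  PartialInj σ ∧
  (∀ i, σ i = none → EpsTrivial (IntervalMod k (A i) (hA i)) (2 * ε)) ∧
  (∀ j, (∀ i, σ i ≠ some j) → EpsTrivial (IntervalMod k (B j) (hB j)) (2 * ε)) ∧
  (∀ i j, σ i = some j →
    Interleaved (IntervalMod k (A i) (hA i)) (IntervalMod k (B j) (hB j)) ε)

/-- The bottleneck distance between the interval decomposable modules with barcodes
`A` and `B`. -/
def bottleneckDist (k : Type) [Field k] {n m k' : ℕ}
    (A : Fin m → Set (Pt n)) (hA : ∀ i, (A i).OrdConnected)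
    (B : Fin k' → Set (Pt n)) (hB : ∀ j, (B j).OrdConnected) : EReal :=
  sInf {x : EReal | ∃ (ε : ℝ) (σ : Fin m → Option (Fin k')),
    0 ≤ ε ∧ IsEpsMatching k A hA B hB σ ε ∧ x = (ε : EReal)}


/-!
A morphism `f : k_I → k_J[ε]` of interval modules is a scalar on `I ∩ (J - ε)`, so naturality
propagates the support of `f`: if `f_u ≠ 0`, then `f_v ≠ 0` for every `v ≤ u` in `I` (the internal
map `v → u` is onto), and every `v ≥ u` with `v + ε ∈ J` lies in `I` (the internal map of `J` is
injective there). If the box `∏ (aᵢ, bᵢ)` is wider than `2ε` in every direction, some `u` has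
`u` and `u + 2ε` in it; then `g ∘ f ≠ 0` at `u`, so `f_u ≠ 0` and `g_{u+ε} ≠ 0`, and moving one
coordinate of `u` at a time pins every corner of one box within `ε` of the other. Conversely,
corners within `ε` make the "identity where defined" maps an `ε`-interleaving, and two boxes
that are `2ε`-thin in some direction are interleaved by zero maps.
-/

lemma EReal.lt_coe_add_of_le_add {x z : EReal} {t ε : ℝ} (h : z ≤ x + ε) (hx : x < t) :
    z < ((t + ε : ℝ) : EReal) := by
  rw [EReal.coe_add]
  exact h.trans_lt (EReal.add_lt_add_right_coe hx ε)

lemma EReal.coe_lt_of_coe_add_lt {y z : EReal} {t ε : ℝ} (h : ((t + ε : ℝ) : EReal) < y)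
    (hy : y ≤ z + ε) : (t : EReal) < z := by
  rw [EReal.coe_add] at h
  exact lt_of_not_ge fun hzt => (h.trans_le hy).not_ge (add_le_add_left hzt _)

lemma EReal.le_add_of_forall_lt_coe_add {x z : EReal} {t₀ ε : ℝ} (hx : x < t₀)
    (h : ∀ t : ℝ, x < t → t ≤ t₀ → z < ((t + ε : ℝ) : EReal)) : z ≤ x + ε := by
  by_contra! hlt
  obtain ⟨s, hxs, hs⟩ :=
    EReal.exists_between_coe_real (lt_min hlt (EReal.add_lt_add_right_coe hx ε))
  rw [lt_min_iff, ← EReal.coe_add, EReal.coe_lt_coe_iff] at hs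
  have hxs' : x < ((s - ε : ℝ) : EReal) := by
    rw [EReal.coe_sub]
    exact (EReal.lt_sub_iff_add_lt (by simp) (by simp)).2 hxs
  have := h (s - ε) hxs' (by linarith)
  rw [_root_.sub_add_cancel] at this
  exact this.not_gt hs.1

lemma EReal.le_add_of_forall_coe_lt {y z : EReal} {t₀ ε : ℝ} (hy : ((t₀ + ε : ℝ) : EReal) < y)
    (h : ∀ t : ℝ, t₀ ≤ t → ((t + ε : ℝ) : EReal) < y → (t : EReal) < z) : y ≤ z + ε := by
  by_contra! hlt
  obtain ⟨s, hs, hsy⟩ := EReal.exists_between_coe_real (max_lt hlt hy)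
  rw [max_lt_iff, EReal.coe_lt_coe_iff] at hs
  have hzs : z < ((s - ε : ℝ) : EReal) := by
    rw [EReal.coe_sub]
    exact (EReal.lt_sub_iff_add_lt (by simp) (by simp)).2 hs.1
  have := h (s - ε) (by linarith) (by rwa [_root_.sub_add_cancel])
  exact this.not_gt hzs

lemma EReal.exists_lt_coe_add_lt {x y : EReal} {r : ℝ} (h : x + r < y) :
    ∃ t : ℝ, x < t ∧ ((t + r : ℝ) : EReal) < y := by
  obtain ⟨s, hxs, hsy⟩ := EReal.exists_between_coe_real h
  refine ⟨s - r, ?_, by rwa [_root_.sub_add_cancel]⟩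
  rw [EReal.coe_sub]
  exact (EReal.lt_sub_iff_add_lt (by simp) (by simp)).2 hxs

lemma esub_le_iff {x y : EReal} {r : ℝ} (hr : 0 ≤ r) : esub x y ≤ r ↔ x ≤ y + r := by
  unfold esub
  split_ifs with hxy
  · rcases hxy with ⟨rfl, rfl⟩ | ⟨rfl, rfl⟩ <;> simp [hr]
  · rw [EReal.sub_le_iff_le_add (by simp) (by simp), add_comm]

lemma esub_nonneg {x y : EReal} (h : y ≤ x) : 0 ≤ esub x y := by
  unfold esub
  split_ifs with hxy
  · rfl
  · exact (EReal.sub_nonneg (by tauto) (by tauto)).2 h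

lemma neg_esub (x y : EReal) : -esub x y = esub y x := by
  unfold esub
  by_cases h : (x = ⊤ ∧ y = ⊤) ∨ (x = ⊥ ∧ y = ⊥)
  · rw [if_pos h, if_pos (by tauto), neg_zero]
  · rw [if_neg h, if_neg (by tauto), EReal.neg_sub (by tauto) (by tauto), add_comm,
      sub_eq_add_neg]

lemma eabs_neg (x : EReal) : eabs (-x) = eabs x := by
  rw [eabs, eabs, neg_neg, max_comm]

lemma eabs_nonneg (x : EReal) : 0 ≤ eabs x := by
  rcases le_total 0 x with h | h
  · exact h.trans (le_max_left _ _)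
  · exact (EReal.neg_nonneg.2 h).trans (le_max_right _ _)

lemma eabs_esub_le_iff {x y : EReal} {r : ℝ} (hr : 0 ≤ r) :
    eabs (esub x y) ≤ r ↔ x ≤ y + r ∧ y ≤ x + r := by
  rw [eabs, max_le_iff, neg_esub, esub_le_iff hr, esub_le_iff hr]

lemma supDist_comm (x y : Fin n → EReal) : supDist x y = supDist y x := by
  simp only [supDist, ← neg_esub (y _), eabs_neg]

lemma supDist_nonneg [Nonempty (Fin n)] (x y : Fin n → EReal) : 0 ≤ supDist x y :=
  le_iSup_of_le (Classical.arbitrary _) (eabs_nonneg _)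

lemma supDist_le_iff {x y : Fin n → EReal} {r : ℝ} (hr : 0 ≤ r) :
    supDist x y ≤ r ↔ ∀ i, x i ≤ y i + r ∧ y i ≤ x i + r := by
  simp only [supDist, iSup_le_iff, eabs_esub_le_iff hr]

lemma esub_div_two_le_iff {x y : EReal} {r : ℝ} (hr : 0 ≤ r) :
    esub y x / 2 ≤ r ↔ y ≤ x + ((2 * r : ℝ) : EReal) := by
  rw [← esub_le_iff (by positivity), EReal.div_le_iff_le_mul two_pos (by decide), EReal.coe_mul]
  rfl

instance {M N : PersMod k n} : Zero (PersHom M N) :=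
  ⟨{ app := fun _ => 0
     natural := fun _ => by rw [LinearMap.zero_comp, LinearMap.comp_zero] }⟩

lemma PersHom.app_eq_zero_of_map_eq_zero {M N : PersMod k n} (f : PersHom M N) {u v : Pt n}
    (h : u ≤ v) (hM : M.map h = 0) (hN : Function.Injective (N.map h)) : f.app u = 0 := by
  have hnat := f.natural h
  rw [hM, LinearMap.comp_zero] at hnat
  exact (LinearMap.cancel_left hN).1 (hnat.symm.trans (LinearMap.comp_zero _).symm)

lemma PersHom.app_eq_zero_of_app_eq_zero {M N : PersMod k n} (f : PersHom M N) {u v : Pt n}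
    (h : u ≤ v) (hu : f.app u = 0) (hM : Function.Surjective (M.map h)) : f.app v = 0 := by
  have hnat := f.natural h
  rw [hu, LinearMap.comp_zero, ← LinearMap.zero_comp (M.map h)] at hnat
  exact (LinearMap.cancel_right hM).1 hnat

lemma Interleaved.symm {M N : PersMod k n} {ε : ℝ} (h : Interleaved M N ε) :
    Interleaved N M ε :=
  let ⟨hε, f, g, hgf, hfg⟩ := h
  ⟨hε, g, f, hfg, hgf⟩

lemma EpsTrivial.map_shiftPt_shiftPt {M : PersMod k n} {ε : ℝ} (hM : EpsTrivial M (2 * ε))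
    (u : Pt n) (h : u ≤ shiftPt (shiftPt u ε) ε) : M.map h = 0 := by
  have hu : shiftPt (shiftPt u ε) ε = shiftPt u (2 * ε) := by
    funext i
    simp only [shiftPt]
    ring
  revert h
  rw [hu]
  exact hM u

lemma Interleaved.of_epsTrivial {M N : PersMod k n} {ε : ℝ} (hε : 0 ≤ ε)
    (hM : EpsTrivial M (2 * ε)) (hN : EpsTrivial N (2 * ε)) : Interleaved M N ε :=
  ⟨hε, 0, 0, fun u => (LinearMap.zero_comp _).trans (hM.map_shiftPt_shiftPt u _).symm,
    fun u => (LinearMap.zero_comp _).trans (hN.map_shiftPt_shiftPt u _).symm⟩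

lemma IsInterleavingPair.app_ne_zero {M N : PersMod k n} {ε : ℝ} {hε : 0 ≤ ε}
    {f : PersHom M (N.shift ε)} {g : PersHom N (M.shift ε)} (hfg : IsInterleavingPair M N ε hε f g)
    {u : Pt n} (hu : M.map ((le_shiftPt u hε).trans (le_shiftPt _ hε)) ≠ 0) :
    f.app u ≠ 0 ∧ g.app (shiftPt u ε) ≠ 0 := by
  rw [← hfg.1 u] at hu
  exact ⟨fun h => hu (by rw [h]; exact LinearMap.comp_zero _),
    fun h => hu (by rw [h]; exact LinearMap.zero_comp _)⟩

lemma interleavingDist_eq_of_forall_interleaved_iff {M N : PersMod k n} {x : EReal}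
    (h : ∀ ε : ℝ, Interleaved M N ε ↔ x ≤ ε) : interleavingDist M N = x :=
  le_antisymm (EReal.le_of_forall_lt_iff_le.1 fun z hz => sInf_le ⟨z, (h z).2 hz.le, rfl⟩)
    (le_sInf <| by rintro _ ⟨ε, hε, rfl⟩; exact (h ε).1 hε)

section IntervalMod

variable {I J K : Set (Pt n)} {u v w : Pt n}

lemma segSpace_subsingleton (hu : u ∉ I) : Subsingleton (segSpace k I u) :=
  ⟨fun x y => Subtype.ext ((x.2 hu).trans (y.2 hu).symm)⟩

/-- The internal maps of `IntervalMod` are definitionally `segMap`s. -/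
def segMap (k : Type) [Field k] (I J : Set (Pt n)) (u v : Pt n) :
    segSpace k I u →ₗ[k] segSpace k J v where
  toFun x := ⟨if v ∈ J then (x : k) else 0, fun hv => if_neg hv⟩
  map_add' x y := by ext; by_cases hv : v ∈ J <;> simp [hv]
  map_smul' c x := by ext; by_cases hv : v ∈ J <;> simp [hv]

@[simp]
lemma segMap_coe (x : segSpace k I u) :
    (segMap k I J u v x : k) = if v ∈ J then (x : k) else 0 := rfl

lemma segMap_comp (h : u ∈ I → w ∈ K → v ∈ J) :
    (segMap k J K v w).comp (segMap k I J u v) = segMap k I K u w := by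
  ext x
  by_cases hw : w ∈ K <;> by_cases hv : v ∈ J <;> simp [hw, hv]
  exact (x.2 fun hu => hv (h hu hw)).symm

lemma segMap_eq_zero (h : u ∈ I → v ∉ J) : segMap k I J u v = 0 := by
  ext x
  by_cases hv : v ∈ J <;> simp [hv]
  exact Subtype.ext (x.2 fun hu => h hu hv)

lemma segMap_ne_zero (hu : u ∈ I) (hv : v ∈ J) : segMap k I J u v ≠ 0 := fun h => by
  simpa [hv] using congr_arg Subtype.val (LinearMap.congr_fun h ⟨1, fun h => absurd hu h⟩)

lemma segMap_injective (hv : v ∈ J) : Function.Injective (segMap k I J u v) := fun x y h =>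
  Subtype.ext (by simpa [hv] using congr_arg Subtype.val h)

lemma segMap_surjective (hu : u ∈ I) : Function.Surjective (segMap k I J u v) := fun y =>
  ⟨⟨y, fun h => absurd hu h⟩, Subtype.ext <| by
    by_cases hv : v ∈ J
    · simp [hv]
    · simp [hv, y.2 hv]⟩

namespace IntervalMod

variable {hI : I.OrdConnected} {hJ : J.OrdConnected} {ε : ℝ}
  (f : PersHom (IntervalMod k I hI) ((IntervalMod k J hJ).shift ε))

lemma mem_of_app_ne_zero (hf : f.app u ≠ 0) : u ∈ I ∧ shiftPt u ε ∈ J := by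
  constructor <;> by_contra h <;> apply hf
  · have : Subsingleton ((IntervalMod k I hI).obj u) := segSpace_subsingleton h
    exact Subsingleton.elim _ _
  · have : Subsingleton (((IntervalMod k J hJ).shift ε).obj u) := segSpace_subsingleton h
    exact Subsingleton.elim _ _

lemma mem_of_le_of_app_ne_zero (huv : u ≤ v) (hf : f.app u ≠ 0) (hv : shiftPt v ε ∈ J) :
    v ∈ I := by
  by_contra hvI
  exact hf (f.app_eq_zero_of_map_eq_zero huv (segMap_eq_zero fun _ => hvI) (segMap_injective hv))

lemma app_ne_zero_of_le (huv : u ≤ v) (hu : u ∈ I) (hf : f.app v ≠ 0) : f.app u ≠ 0 :=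
  fun h => hf (f.app_eq_zero_of_app_eq_zero huv h (segMap_surjective hu))

end IntervalMod

def IntervalMod.shiftHom (hI : I.OrdConnected) (hJ : J.OrdConnected) (ε : ℝ)
    (h : ∀ ⦃u v⦄, u ≤ v → u ∈ I → shiftPt v ε ∈ J → v ∈ I ∧ shiftPt u ε ∈ J) :
    PersHom (IntervalMod k I hI) ((IntervalMod k J hJ).shift ε) where
  app u := segMap k I J u (shiftPt u ε)
  natural huv := (segMap_comp fun hu hv => (h huv hu hv).1).trans
    (segMap_comp fun hu hv => (h huv hu hv).2).symm

theorem IntervalMod.interleaved {hI : I.OrdConnected} {hJ : J.OrdConnected} {ε : ℝ}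
    (hε : 0 ≤ ε)
    (hIJ : ∀ ⦃u v⦄, u ≤ v → u ∈ I → shiftPt v ε ∈ J → v ∈ I ∧ shiftPt u ε ∈ J)
    (hJI : ∀ ⦃u v⦄, u ≤ v → u ∈ J → shiftPt v ε ∈ I → v ∈ J ∧ shiftPt u ε ∈ I)
    (hIJI : ∀ ⦃u⦄, u ∈ I → shiftPt (shiftPt u ε) ε ∈ I → shiftPt u ε ∈ J)
    (hJIJ : ∀ ⦃u⦄, u ∈ J → shiftPt (shiftPt u ε) ε ∈ J → shiftPt u ε ∈ I) :
    Interleaved (IntervalMod k I hI) (IntervalMod k J hJ) ε :=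
  ⟨hε, shiftHom hI hJ ε hIJ, shiftHom hJ hI ε hJI, fun _ => segMap_comp (hIJI ·),
    fun _ => segMap_comp (hJIJ ·)⟩

end IntervalMod

section RectMod

variable {a b c d : Fin n → EReal} {u : Pt n} {ε : ℝ}

lemma update_mem_box (hu : u ∈ box a b) {i : Fin n} {t : ℝ} :
    Function.update u i t ∈ box a b ↔ a i < t ∧ (t : EReal) < b i := by
  refine ⟨fun h => by simpa using h i, fun ht j => ?_⟩
  rcases eq_or_ne j i with rfl | hj
  · simpa using ht
  · simpa [Function.update_of_ne hj] using hu j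

lemma shiftPt_update (u : Pt n) (i : Fin n) (t ε : ℝ) :
    shiftPt (Function.update u i t) ε = Function.update (shiftPt u ε) i (t + ε) := by
  funext j
  rcases eq_or_ne j i with rfl | hj <;> simp [shiftPt, Function.update_of_ne, *]

lemma mem_box_and_shiftPt_mem_box (hca : ∀ i, c i ≤ a i + ε) (hdb : ∀ i, d i ≤ b i + ε)
    ⦃u v : Pt n⦄ (huv : u ≤ v) (hu : u ∈ box a b) (hv : shiftPt v ε ∈ box c d) :
    v ∈ box a b ∧ shiftPt u ε ∈ box c d :=
  ⟨fun i => ⟨(hu i).1.trans_le (EReal.coe_le_coe_iff.2 (huv i)),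
      EReal.coe_lt_of_coe_add_lt (hv i).2 (hdb i)⟩,
    fun i => ⟨EReal.lt_coe_add_of_le_add (hca i) (hu i).1,
      (EReal.coe_le_coe_iff.2 (shiftPt_mono ε huv i)).trans_lt (hv i).2⟩⟩

lemma shiftPt_mem_box_of_shiftPt_shiftPt_mem (hca : ∀ i, c i ≤ a i + ε)
    (hbd : ∀ i, b i ≤ d i + ε) ⦃u : Pt n⦄ (hu : u ∈ box a b)
    (hu' : shiftPt (shiftPt u ε) ε ∈ box a b) : shiftPt u ε ∈ box c d := fun i =>
  ⟨EReal.lt_coe_add_of_le_add (hca i) (hu i).1, EReal.coe_lt_of_coe_add_lt (hu' i).2 (hbd i)⟩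

lemma exists_mem_box_shiftPt_shiftPt_mem (hε : 0 ≤ ε)
    (h : (ε : EReal) < ⨅ i, esub (b i) (a i) / 2) :
    ∃ u, u ∈ box a b ∧ shiftPt (shiftPt u ε) ε ∈ box a b := by
  have hwide i : a i + ((2 * ε : ℝ) : EReal) < b i :=
    not_le.1 fun hi => (h.trans_le (iInf_le _ i)).not_ge ((esub_div_two_le_iff hε).2 hi)
  choose t hat htb using fun i => EReal.exists_lt_coe_add_lt (hwide i)
  refine ⟨t, fun i => ⟨hat i, ?_⟩, fun i => ⟨?_, ?_⟩⟩
  · exact (EReal.coe_le_coe_iff.2 (by linarith)).trans_lt (htb i)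
  · exact (hat i).trans_le (EReal.coe_le_coe_iff.2 (by simp only [shiftPt]; linarith))
  · convert htb i using 2
    simp only [shiftPt]
    ring

namespace RectMod

lemma epsTrivial_of_le {δ : ℝ} {i : Fin n} (h : b i ≤ a i + δ) :
    EpsTrivial (RectMod k a b) δ := fun _ _ =>
  segMap_eq_zero fun hu hv => (hu i).1.not_gt (EReal.coe_lt_of_coe_add_lt (hv i).2 h)

lemma epsTrivial_of_iInf_le [Nonempty (Fin n)] (hε : 0 ≤ ε)
    (h : ⨅ i, esub (b i) (a i) / 2 ≤ ε) : EpsTrivial (RectMod k a b) (2 * ε) := by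
  obtain ⟨i, hi⟩ := exists_eq_ciInf_of_finite (f := fun i => esub (b i) (a i) / 2)
  exact epsTrivial_of_le ((esub_div_two_le_iff hε).1 (hi.trans_le h))

lemma interleaved_of_supDist_le (hε : 0 ≤ ε) (hca : supDist c a ≤ ε) (hdb : supDist d b ≤ ε) :
    Interleaved (RectMod k a b) (RectMod k c d) ε := by
  rw [supDist_le_iff hε] at hca hdb
  exact IntervalMod.interleaved hε
    (mem_box_and_shiftPt_mem_box (hca · |>.1) (hdb · |>.1))
    (mem_box_and_shiftPt_mem_box (hca · |>.2) (hdb · |>.2))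
    (shiftPt_mem_box_of_shiftPt_shiftPt_mem (hca · |>.1) (hdb · |>.2))
    (shiftPt_mem_box_of_shiftPt_shiftPt_mem (hca · |>.2) (hdb · |>.1))

variable (f : PersHom (RectMod k a b) ((RectMod k c d).shift ε)) {u₀ : Pt n}

lemma lower_le_add_of_app_ne_zero (hf : f.app u₀ ≠ 0) (i : Fin n) : c i ≤ a i + ε := by
  have hu₀ := (IntervalMod.mem_of_app_ne_zero f hf).1
  refine EReal.le_add_of_forall_lt_coe_add (hu₀ i).1 fun t hat ht => ?_
  have hv : Function.update u₀ i t ∈ box a b :=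
    (update_mem_box hu₀).2 ⟨hat, (EReal.coe_le_coe_iff.2 ht).trans_lt (hu₀ i).2⟩
  have hfv := IntervalMod.app_ne_zero_of_le f (update_le_self_iff.2 ht) hv hf
  simpa [shiftPt] using ((IntervalMod.mem_of_app_ne_zero f hfv).2 i).1

lemma upper_le_add_of_app_ne_zero (hf : f.app u₀ ≠ 0) (i : Fin n) : d i ≤ b i + ε := by
  have hu₀ := (IntervalMod.mem_of_app_ne_zero f hf).2
  refine EReal.le_add_of_forall_coe_lt (hu₀ i).2 fun t ht htd => ?_
  have hv : shiftPt (Function.update u₀ i t) ε ∈ box c d := by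
    rw [shiftPt_update]
    exact (update_mem_box hu₀).2
      ⟨(hu₀ i).1.trans_le (EReal.coe_le_coe_iff.2 (add_le_add ht le_rfl)), htd⟩
  simpa using (IntervalMod.mem_of_le_of_app_ne_zero f (le_update_self_iff.2 ht) hf hv i).2

theorem supDist_le_of_interleaved (hwide : (ε : EReal) < ⨅ i, esub (b i) (a i) / 2)
    (h : Interleaved (RectMod k a b) (RectMod k c d) ε) :
    supDist c a ≤ ε ∧ supDist d b ≤ ε := by
  obtain ⟨hε, f, g, hfg⟩ := h
  obtain ⟨u₀, hu₀, hu₀'⟩ := exists_mem_box_shiftPt_shiftPt_mem hε hwide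
  obtain ⟨hf, hg⟩ := hfg.app_ne_zero (segMap_ne_zero hu₀ hu₀')
  rw [supDist_le_iff hε, supDist_le_iff hε]
  exact ⟨fun i => ⟨lower_le_add_of_app_ne_zero f hf i, lower_le_add_of_app_ne_zero g hg i⟩,
    fun i => ⟨upper_le_add_of_app_ne_zero f hf i, upper_le_add_of_app_ne_zero g hg i⟩⟩

end RectMod

end RectMod

theorem interleavingDist_rectMod_nParam_general {n : ℕ} (hn : 0 < n)
    (a b c d : Fin n → EReal)
    (hab : ∀ i, a i < b i) :
    interleavingDist (RectMod k a b) (RectMod k c d) = dIFormula a b c d := by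
  have : Nonempty (Fin n) := ⟨⟨0, hn⟩⟩
  have hwidth : 0 ≤ ⨅ i, esub (b i) (a i) / 2 :=
    le_iInf fun i => EReal.div_nonneg (esub_nonneg (hab i).le) zero_le_two
  refine interleavingDist_eq_of_forall_interleaved_iff fun ε => ?_
  rw [dIFormula, min_le_iff, max_le_iff, max_le_iff]
  constructor
  · intro h
    by_cases hthin : ⨅ i, esub (b i) (a i) / 2 ≤ ε ∧ ⨅ i, esub (d i) (c i) / 2 ≤ ε
    · exact Or.inl hthin
    right
    rcases not_and_or.1 hthin with hwide | hwide
    · exact RectMod.supDist_le_of_interleaved (not_le.1 hwide) h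
    · rw [supDist_comm c, supDist_comm d]
      exact RectMod.supDist_le_of_interleaved (not_le.1 hwide) h.symm
  · rintro (⟨hthin_ab, hthin_cd⟩ | ⟨hca, hdb⟩)
    · have hε := EReal.coe_nonneg.1 (hwidth.trans hthin_ab)
      exact Interleaved.of_epsTrivial hε (RectMod.epsTrivial_of_iInf_le hε hthin_ab)
        (RectMod.epsTrivial_of_iInf_le hε hthin_cd)
    · have hε := EReal.coe_nonneg.1 ((supDist_nonneg c a).trans hca)
      exact RectMod.interleaved_of_supDist_le hε hca hdb

theorem interleavingDist_rectMod_nParam {n : ℕ} (hn : 0 < n)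
    (a b c d : Fin n → EReal)
    (ha : ∀ i, a i ≠ ⊤) (hb : ∀ i, b i ≠ ⊥)
    (hc : ∀ i, c i ≠ ⊤) (hd : ∀ i, d i ≠ ⊥) (hab : ∀ i, a i < b i) (hcd : ∀ i, c i < d i) :
    interleavingDist (RectMod k a b) (RectMod k c d) = dIFormula a b c d :=
  interleavingDist_rectMod_nParam_general hn a b c d hab
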